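/- Let {c_n}_{n≥1} be a complex sequence with lim_{n→∞} c_n = 0 that is O-regularly varying quasimonotone: there exist θ₀ ∈ [0, π/2) and a non-decreasing positive sequence {R(n)} with limsup_{n→∞} R(2n)/R(n) < ∞ such that c_n/R(n) − c_{n+1}/R(n+1) ∈ K(θ₀) for all n ≥ 1. Then {c_n} satisfies condition (2*): there exist a natural number N₀ and a constant M > 0 such that for every m ≥ 1, ∑_{n=m}^{2m} |c_n − c_{n+1}| ≤ M · max_{m ≤ n < m+N₀} |c_n|. -/

import Mathlib

open Filter Finset

lemma tele_aux {G : Type*} [AddCommGroup G] (f : ℕ → G) (m : ℕ) :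
    ∀ N, m ≤ N + 1 → ∑ k ∈ Finset.Icc m N, (f k - f (k + 1)) = f m - f (N + 1) := by
  intro N
  induction N with
  | zero =>
    intro h
    interval_cases m
    · simp
    · simp
  | succ N ih =>
    intro h
    rcases Nat.lt_or_ge m (N + 2) with h' | h'
    · have hm : m ≤ N + 1 := by omega
      rw [← Finset.insert_Icc_right_eq_Icc_add_one (by omega : m ≤ N + 1), Finset.sum_insert (by simp), ih hm]
      abel
    · have : m = N + 2 := by omega
      subst this
      simp

lemma re_ge_abs_mul_cos {θ₀ : ℝ} (hθ1 : θ₀ < Real.pi / 2) (z : ℂ)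
    (h : |z.arg| ≤ θ₀) : ‖z‖ * Real.cos θ₀ ≤ z.re := by
  rcases eq_or_ne z 0 with rfl | hz
  · simp
  · have h1 : Real.cos θ₀ ≤ Real.cos z.arg := by
      rw [← Real.cos_abs z.arg]
      apply Real.cos_le_cos_of_nonneg_of_le_pi (abs_nonneg _) _ h
      linarith [Real.pi_pos]
    have h2 : Real.cos z.arg = z.re / ‖z‖ := Complex.cos_arg hz
    have h3 : 0 < ‖z‖ := norm_pos_iff.mpr hz
    rw [h2] at h1
    calc ‖z‖ * Real.cos θ₀ ≤ ‖z‖ * (z.re / ‖z‖) :=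
          mul_le_mul_of_nonneg_left h1 h3.le
      _ = z.re := by field_simp

lemma key_fact {c : ℕ → ℂ} {R : ℕ → ℝ} {θ₀ : ℝ} (hθ0 : 0 ≤ θ₀) (hθ1 : θ₀ < Real.pi / 2)
    (hc0 : Tendsto c atTop (nhds 0))
    (hRpos : ∀ n : ℕ, 1 ≤ n → 0 < R n)
    (hRmono : ∀ a b : ℕ, 1 ≤ a → a ≤ b → R a ≤ R b)
    (harg : ∀ n : ℕ, 1 ≤ n →
      |(c n / (R n : ℂ) - c (n + 1) / (R (n + 1) : ℂ)).arg| ≤ θ₀)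
    (m n : ℕ) (hm : 1 ≤ m) (hmn : m ≤ n) :
    ‖c n / (R n : ℂ)‖ * Real.cos θ₀ ≤ (c m / (R m : ℂ)).re := by
  set f : ℕ → ℂ := fun k => c k / (R k : ℂ) with hf
  have hcos : 0 < Real.cos θ₀ := Real.cos_pos_of_mem_Ioo ⟨by linarith [Real.pi_pos], hθ1⟩
  have tend0 : Tendsto (fun N => f (N + 1)) atTop (nhds 0) := by
    apply squeeze_zero_norm (a := fun N => ‖c (N + 1)‖ / R 1)
    · intro N
      have hR1 : 0 < R 1 := hRpos 1 le_rfl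
      have hRN : R 1 ≤ R (N + 1) := hRmono 1 (N + 1) le_rfl (by omega)
      have : ‖f (N + 1)‖ = ‖c (N + 1)‖ / R (N + 1) := by
        simp [hf, norm_div, Complex.norm_real, abs_of_pos (hRpos (N + 1) (by omega))]
      rw [this]
      exact div_le_div_of_nonneg_left (norm_nonneg _) hR1 hRN
    · simpa using ((hc0.comp (tendsto_add_atTop_nat 1)).norm.div_const (R 1))
  have hev : ∀ᶠ N in atTop,
      ‖f n - f (N + 1)‖ * Real.cos θ₀ ≤ (f m).re - (f (N + 1)).re := by
    filter_upwards [eventually_ge_atTop n] with N hN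
    have h1 : f n - f (N + 1) = ∑ k ∈ Finset.Icc n N, (f k - f (k + 1)) :=
      (tele_aux f n N (by omega)).symm
    have h2 : ‖f n - f (N + 1)‖ * Real.cos θ₀ ≤
        ∑ k ∈ Finset.Icc n N, ((f k - f (k + 1)).re) := by
      calc ‖f n - f (N + 1)‖ * Real.cos θ₀
          ≤ (∑ k ∈ Finset.Icc n N, ‖f k - f (k + 1)‖) * Real.cos θ₀ := by
            apply mul_le_mul_of_nonneg_right _ hcos.le
            rw [h1]
            exact norm_sum_le _ _
        _ = ∑ k ∈ Finset.Icc n N, (‖f k - f (k + 1)‖ * Real.cos θ₀) := by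
            rw [Finset.sum_mul]
        _ ≤ ∑ k ∈ Finset.Icc n N, ((f k - f (k + 1)).re) := by
            apply Finset.sum_le_sum
            intro k hk
            have hk1 : 1 ≤ k := le_trans (le_trans hm hmn) (Finset.mem_Icc.mp hk).1
            exact re_ge_abs_mul_cos hθ1 _ (harg k hk1)
    have h3 : ∑ k ∈ Finset.Icc n N, ((f k - f (k + 1)).re) ≤
        ∑ k ∈ Finset.Icc m N, ((f k - f (k + 1)).re) := by
      apply Finset.sum_le_sum_of_subset_of_nonneg
      · exact Finset.Icc_subset_Icc_left hmn
      · intro k hk _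
        have hk1 : 1 ≤ k := le_trans hm (Finset.mem_Icc.mp hk).1
        have := re_ge_abs_mul_cos hθ1 _ (harg k hk1)
        nlinarith [norm_nonneg (f k - f (k + 1)), hcos]
    have h4 : ∑ k ∈ Finset.Icc m N, ((f k - f (k + 1)).re) = (f m).re - (f (N + 1)).re := by
      rw [← Complex.re_sum, tele_aux f m N (by omega), Complex.sub_re]
    linarith
  have hL : Tendsto (fun N => ‖f n - f (N + 1)‖ * Real.cos θ₀) atTop
      (nhds (‖f n‖ * Real.cos θ₀)) := by
    have h1 : Tendsto (fun N => f n - f (N + 1)) atTop (nhds (f n)) := by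
      simpa using tendsto_const_nhds.sub tend0
    exact ((continuous_norm.tendsto (f n)).comp h1).mul_const _
  have hR : Tendsto (fun N => (f m).re - (f (N + 1)).re) atTop (nhds ((f m).re)) := by
    have h1 : Tendsto (fun N => (f (N + 1)).re) atTop (nhds 0) := by
      simpa [Function.comp_def] using (Complex.continuous_re.tendsto 0).comp tend0
    simpa using tendsto_const_nhds.sub h1
  exact le_of_tendsto_of_tendsto hL hR hev

/-- Corollary to Theorem 3 of the paper: every complex O-regularly varying
quasimonotone null sequence satisfies condition (2*). -/
theorem corollary_orv_quasimonotone (c : ℕ → ℂ)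
    (hc0 : Tendsto c atTop (nhds 0))
    (hqm : ∃ θ₀ : ℝ, 0 ≤ θ₀ ∧ θ₀ < Real.pi / 2 ∧ ∃ R : ℕ → ℝ,
      (∀ n : ℕ, 1 ≤ n → 0 < R n) ∧
      (∀ n : ℕ, 1 ≤ n → R n ≤ R (n + 1)) ∧
      (∃ C : ℝ, ∀ᶠ n : ℕ in atTop, R (2 * n) / R n ≤ C) ∧
      (∀ n : ℕ, 1 ≤ n →
        |(c n / (R n : ℂ) - c (n + 1) / (R (n + 1) : ℂ)).arg| ≤ θ₀)) :
    ∃ N₀ : ℕ, ∃ hN₀ : 0 < N₀, ∃ M : ℝ, 0 < M ∧ ∀ m : ℕ, 1 ≤ m →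
      ∑ n ∈ Finset.Icc m (2 * m), ‖c n - c (n + 1)‖ ≤
        M * (Finset.Ico m (m + N₀)).sup' (Finset.nonempty_Ico.mpr (by omega))
          (fun n => ‖c n‖) := by
  obtain ⟨θ₀, hθ0, hθ1, R, hRpos, hRstep, ⟨C, hC⟩, harg⟩ := hqm
  have hcos : 0 < Real.cos θ₀ := Real.cos_pos_of_mem_Ioo ⟨by linarith [Real.pi_pos], hθ1⟩
  have hRmono : ∀ a b : ℕ, 1 ≤ a → a ≤ b → R a ≤ R b := by
    intro a b ha hab
    induction b, hab using Nat.le_induction with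
    | base => exact le_rfl
    | succ k hk ih => exact ih.trans (hRstep k (le_trans ha hk))
  obtain ⟨N, hN⟩ := eventually_atTop.mp hC
  have hCpos : 0 < C := by
    have h1 := hN (max N 1) (le_max_left _ _)
    have hm1 : 1 ≤ max N 1 := le_max_right _ _
    have h2 : 0 < R (max N 1) := hRpos _ hm1
    have h3 : 0 < R (2 * max N 1) := hRpos _ (by omega)
    have h4 : 0 < R (2 * max N 1) / R (max N 1) := div_pos h3 h2
    linarith
  set B : ℝ := max (max (C * C) 1)
      ((Finset.Icc 1 (N + 1)).sup' ⟨1, by simp⟩ (fun k => R (2 * k + 2) / R k)) with hBdef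
  have hB1 : (1 : ℝ) ≤ B := le_trans (le_max_right _ _) (le_max_left _ _)
  have hBkey : ∀ m : ℕ, 1 ≤ m → R (2 * m + 2) ≤ B * R m := by
    intro m hm
    have hRm : 0 < R m := hRpos m hm
    rcases le_or_gt m (N + 1) with h | h
    · have hle : R (2 * m + 2) / R m ≤ B :=
        le_trans (Finset.le_sup' (fun k => R (2 * k + 2) / R k)
          (Finset.mem_Icc.mpr ⟨hm, h⟩)) (le_max_right _ _)
      rw [div_le_iff₀ hRm] at hle
      exact hle
    · have h1 : R (2 * m) ≤ C * R m := by
        have := hN m (by omega)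
        rwa [div_le_iff₀ hRm] at this
      have h2 : R (2 * (m + 1)) ≤ C * R (m + 1) := by
        have := hN (m + 1) (by omega)
        rwa [div_le_iff₀ (hRpos _ (by omega))] at this
      have h3 : R (m + 1) ≤ R (2 * m) := hRmono (m + 1) (2 * m) (by omega) (by omega)
      have hCC : C * C ≤ B := le_trans (le_max_left _ _) (le_max_left _ _)
      calc R (2 * m + 2) = R (2 * (m + 1)) := by ring_nf
        _ ≤ C * R (m + 1) := h2
        _ ≤ C * R (2 * m) := mul_le_mul_of_nonneg_left h3 hCpos.le
        _ ≤ C * (C * R m) := mul_le_mul_of_nonneg_left h1 hCpos.le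
        _ = C * C * R m := by ring
        _ ≤ B * R m := mul_le_mul_of_nonneg_right hCC hRm.le
  refine ⟨1, one_pos, 2 * B / Real.cos θ₀, by positivity, ?_⟩
  intro m hm
  set f : ℕ → ℂ := fun k => c k / (R k : ℂ) with hf
  have key := key_fact hθ0 hθ1 hc0 hRpos hRmono harg
  have hRm : 0 < R m := hRpos m hm
  have hfm_re : (f m).re ≤ ‖c m‖ / R m := by
    calc (f m).re ≤ ‖f m‖ := Complex.re_le_norm _
      _ = ‖c m‖ / R m := by
          rw [hf]; simp [norm_div, Complex.norm_real, abs_of_pos hRm]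
  -- `key'` : for n ≥ m, |c n| ≤ R n * |c m| / (R m * cos θ₀)
  have key' : ∀ n : ℕ, m ≤ n → ‖c n‖ ≤
      R n * (‖c m‖ / (R m * Real.cos θ₀)) := by
    intro n hn
    have hRn : 0 < R n := hRpos n (le_trans hm hn)
    have h1 := key m n hm hn
    have h2 : ‖c n / (R n : ℂ)‖ = ‖c n‖ / R n := by
      simp [norm_div, Complex.norm_real, abs_of_pos hRn]
    rw [h2] at h1
    have := le_trans h1 hfm_re
    rw [div_mul_eq_mul_div, div_le_div_iff₀ hRn hRm] at this
    have hpos : (0:ℝ) < R m * Real.cos θ₀ := by positivity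
    rw [← mul_div_assoc, le_div_iff₀ hpos]
    calc ‖c n‖ * (R m * Real.cos θ₀) = ‖c n‖ * Real.cos θ₀ * R m := by ring
      _ ≤ ‖c m‖ * R n := this
      _ = R n * ‖c m‖ := by ring
  -- per-term decomposition
  have hterm : ∀ n ∈ Finset.Icc m (2 * m), ‖c n - c (n + 1)‖ ≤
      R n * ‖f n - f (n + 1)‖ +
        ‖c (n + 1)‖ * (1 - R n / R (n + 1)) := by
    intro n hn
    have hn1 : 1 ≤ n := le_trans hm (Finset.mem_Icc.mp hn).1
    have hRn : 0 < R n := hRpos n hn1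
    have hRn1 : 0 < R (n + 1) := hRpos (n + 1) (by omega)
    have hzn : (R n : ℂ) ≠ 0 := by exact_mod_cast hRn.ne'
    have hzn1 : (R (n + 1) : ℂ) ≠ 0 := by exact_mod_cast hRn1.ne'
    have hdecomp : c n - c (n + 1) = (R n : ℂ) * (f n - f (n + 1)) +
        c (n + 1) * (((R n / R (n + 1) - 1 : ℝ)) : ℂ) := by
      rw [hf]
      push_cast
      field_simp
      ring
    rw [hdecomp]
    refine le_trans (norm_add_le _ _) ?_
    rw [norm_mul, norm_mul, Complex.norm_real, Real.norm_eq_abs, abs_of_pos hRn, Complex.norm_real, Real.norm_eq_abs]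
    have hratio : R n / R (n + 1) ≤ 1 := by
      rw [div_le_one hRn1]
      exact hRstep n hn1
    rw [abs_of_nonpos (by linarith)]
    apply add_le_add le_rfl
    apply le_of_eq
    ring
  calc ∑ n ∈ Finset.Icc m (2 * m), ‖c n - c (n + 1)‖
      ≤ ∑ n ∈ Finset.Icc m (2 * m), (R n * ‖f n - f (n + 1)‖ +
          ‖c (n + 1)‖ * (1 - R n / R (n + 1))) := Finset.sum_le_sum hterm
    _ = (∑ n ∈ Finset.Icc m (2 * m), R n * ‖f n - f (n + 1)‖) +
        (∑ n ∈ Finset.Icc m (2 * m), ‖c (n + 1)‖ * (1 - R n / R (n + 1))) :=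
        Finset.sum_add_distrib
    _ ≤ B * ‖c m‖ / Real.cos θ₀ + B * ‖c m‖ / Real.cos θ₀ := by
        gcongr ?_ + ?_
        · -- Term 1
          have hd_sum : (∑ n ∈ Finset.Icc m (2 * m), ‖f n - f (n + 1)‖) *
              Real.cos θ₀ ≤ ‖c m‖ / R m := by
            have e1 : ∑ n ∈ Finset.Icc m (2 * m), ((f n - f (n + 1)).re) =
                (f m).re - (f (2 * m + 1)).re := by
              rw [← Complex.re_sum, tele_aux f m (2 * m) (by omega), Complex.sub_re]
            have e2 : (∑ n ∈ Finset.Icc m (2 * m), ‖f n - f (n + 1)‖) *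
                Real.cos θ₀ ≤ ∑ n ∈ Finset.Icc m (2 * m), ((f n - f (n + 1)).re) := by
              rw [Finset.sum_mul]
              apply Finset.sum_le_sum
              intro k hk
              exact re_ge_abs_mul_cos hθ1 _ (harg k (le_trans hm (Finset.mem_Icc.mp hk).1))
            have e3 : 0 ≤ (f (2 * m + 1)).re := by
              have := key (2 * m + 1) (2 * m + 1) (by omega) le_rfl
              nlinarith [norm_nonneg (c (2 * m + 1) / (R (2 * m + 1) : ℂ))]
            linarith
          have hR2m : R (2 * m) ≤ B * R m :=
            le_trans (hRmono (2 * m) (2 * m + 2) (by omega) (by omega)) (hBkey m hm)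
          calc ∑ n ∈ Finset.Icc m (2 * m), R n * ‖f n - f (n + 1)‖
              ≤ ∑ n ∈ Finset.Icc m (2 * m), R (2 * m) * ‖f n - f (n + 1)‖ := by
                apply Finset.sum_le_sum
                intro k hk
                exact mul_le_mul_of_nonneg_right
                  (hRmono k (2 * m) (le_trans hm (Finset.mem_Icc.mp hk).1)
                    (Finset.mem_Icc.mp hk).2) (norm_nonneg _)
            _ = R (2 * m) * ∑ n ∈ Finset.Icc m (2 * m), ‖f n - f (n + 1)‖ :=
                (Finset.mul_sum _ _ _).symm
            _ ≤ R (2 * m) * (‖c m‖ / R m / Real.cos θ₀) := by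
                apply mul_le_mul_of_nonneg_left _ (hRpos (2 * m) (by omega)).le
                rw [le_div_iff₀ hcos]
                exact hd_sum
            _ ≤ B * R m * (‖c m‖ / R m / Real.cos θ₀) := by
                apply mul_le_mul_of_nonneg_right hR2m
                positivity
            _ = B * ‖c m‖ / Real.cos θ₀ := by field_simp
        · -- Term 2
          have hsumR : ∑ n ∈ Finset.Icc m (2 * m), (R (n + 1) - R n) =
              R (2 * m + 1) - R m := by
            have := tele_aux R m (2 * m) (by omega)
            have h' : ∑ n ∈ Finset.Icc m (2 * m), (R (n + 1) - R n) =
                -∑ n ∈ Finset.Icc m (2 * m), (R n - R (n + 1)) := by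
              rw [← Finset.sum_neg_distrib]
              apply Finset.sum_congr rfl
              intro k _
              ring
            rw [h', this]
            ring
          calc ∑ n ∈ Finset.Icc m (2 * m), ‖c (n + 1)‖ * (1 - R n / R (n + 1))
              ≤ ∑ n ∈ Finset.Icc m (2 * m),
                  (‖c m‖ / (R m * Real.cos θ₀)) * (R (n + 1) - R n) := by
                apply Finset.sum_le_sum
                intro k hk
                have hk1 : 1 ≤ k := le_trans hm (Finset.mem_Icc.mp hk).1
                have hRk : 0 < R k := hRpos k hk1
                have hRk1 : 0 < R (k + 1) := hRpos (k + 1) (by omega)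
                have h1 : ‖c (k + 1)‖ ≤
                    R (k + 1) * (‖c m‖ / (R m * Real.cos θ₀)) :=
                  key' (k + 1) (le_trans (Finset.mem_Icc.mp hk).1 (by omega))
                have h2 : 0 ≤ 1 - R k / R (k + 1) := by
                  rw [sub_nonneg, div_le_one hRk1]
                  exact hRstep k hk1
                calc ‖c (k + 1)‖ * (1 - R k / R (k + 1))
                    ≤ R (k + 1) * (‖c m‖ / (R m * Real.cos θ₀)) *
                        (1 - R k / R (k + 1)) := mul_le_mul_of_nonneg_right h1 h2
                  _ = (‖c m‖ / (R m * Real.cos θ₀)) *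
                        (R (k + 1) * (1 - R k / R (k + 1))) := by ring
                  _ = (‖c m‖ / (R m * Real.cos θ₀)) * (R (k + 1) - R k) := by
                        rw [mul_sub, mul_one, mul_div_cancel₀ _ hRk1.ne']
            _ = (‖c m‖ / (R m * Real.cos θ₀)) * (R (2 * m + 1) - R m) := by
                rw [← Finset.mul_sum, hsumR]
            _ ≤ (‖c m‖ / (R m * Real.cos θ₀)) * (B * R m) := by
                apply mul_le_mul_of_nonneg_left _ (by positivity)
                have := hBkey m hm
                have := hRmono (2 * m + 1) (2 * m + 2) (by omega) (by omega)
                linarith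
            _ = B * ‖c m‖ / Real.cos θ₀ := by field_simp
    _ = 2 * B / Real.cos θ₀ * ‖c m‖ := by ring
    _ ≤ 2 * B / Real.cos θ₀ * (Finset.Ico m (m + 1)).sup'
          (Finset.nonempty_Ico.mpr (by omega)) (fun n => ‖c n‖) := by
        apply mul_le_mul_of_nonneg_left _ (by positivity)
        exact Finset.le_sup' (fun n => ‖c n‖)
          (Finset.mem_Ico.mpr ⟨le_rfl, by omega⟩)
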